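/- The matrix W is invertible, and for every m ∈ {0,…,4} one has W·T_m' = T_m·W, i.e. T_m' = W⁻¹·T_m·W; in particular the subgroup of GL(4,ℂ) generated by T₀',…,T₄' is conjugate to the subgroup generated by T₀,…,T₄. -/

import Mathlib

open Matrix Complex

noncomputable def T : Fin 5 → Matrix (Fin 4) (Fin 4) ℂ :=
  ![!![1,0,0,0; 0,-1,0,0; 0,0,1,0; 0,0,0,-1],
    !![0,I,0,0; -I,0,0,0; 0,0,0,-I; 0,0,I,0],
    !![0,1,0,0; 1,0,0,0; 0,0,0,1; 0,0,1,0],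
    !![0,0,0,1; 0,0,-1,0; 0,-1,0,0; 1,0,0,0],
    !![0,0,0,I; 0,0,-I,0; 0,I,0,0; -I,0,0,0]]

noncomputable def T' : Fin 5 → Matrix (Fin 4) (Fin 4) ℂ :=
  ![!![1,0,0,0; 0,-1,0,0; 0,-1+I,1,0; 1-I,0,0,-1],
    !![I,-1-I,0,1-I; 0,-I,-1+I,0; 0,-1-I,I,0; 1+I,0,-1-I,-I],
    !![1,0,0,-1-I; 0,-1,1+I,0; 0,0,1,0; 0,0,0,-1],
    !![I,0,0,1-I; 1-I,-I,-1+I,0; 0,-1-I,I,1-I; 1+I,0,0,-I],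
    !![1,-1+I,0,-1-I; -1-I,-1,1+I,0; 0,-1+I,1,-1-I; 1-I,0,-1+I,-1]]

noncomputable def Wmat : Matrix (Fin 4) (Fin 4) ℂ :=
  !![1, 1/2 - I/2, -1, 0;
     1, -1/2 + I/2, 0, -1-I;
     0, -1/2 - I/2, I, 0;
     0, 1/2 + I/2, 0, 0]

theorem Matrix.eq_nonsing_inv_mul_mul_of_mul_eq {n α : Type*} [Fintype n] [DecidableEq n]
    [CommRing α] {W A B : Matrix n n α} (hW : IsUnit W) (h : W * A = B * W) :
    A = W⁻¹ * B * W := by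
  rw [mul_assoc, ← h, ← mul_assoc, nonsing_inv_mul W ((isUnit_iff_isUnit_det W).1 hW), one_mul]

theorem MulAut.conj_image_setOf_coe_eq {M ι : Type*} [Monoid M] (g : Mˣ) {f f' : ι → M}
    (h : ∀ m, (g : M) * f' m = f m * g) :
    MulAut.conj g '' {u : Mˣ | ∃ m, (u : M) = f' m} = {u : Mˣ | ∃ m, (u : M) = f m} := by
  ext u
  constructor
  · rintro ⟨v, ⟨m, hv⟩, rfl⟩
    exact ⟨m, by simp [hv, h m]⟩
  · rintro ⟨m, hu⟩
    refine ⟨g⁻¹ * u * g, ⟨m, ?_⟩, by simp [mul_assoc]⟩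
    simp [hu, mul_assoc, ← h m]

theorem Subgroup.map_conj_closure_setOf_coe_eq {M ι : Type*} [Monoid M] (g : Mˣ) {f f' : ι → M}
    (h : ∀ m, (g : M) * f' m = f m * g) :
    Subgroup.map (MulAut.conj g).toMonoidHom (Subgroup.closure {u : Mˣ | ∃ m, (u : M) = f' m})
      = Subgroup.closure {u : Mˣ | ∃ m, (u : M) = f m} := by
  rw [MonoidHom.map_closure]
  exact congrArg _ (MulAut.conj_image_setOf_coe_eq g h)

theorem Wmat_det : Wmat.det = -1 := by
  simp [Wmat, det_succ_row_zero, Fin.sum_univ_succ, Fin.succAbove]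
  ring_nf
  simp [I_sq]

theorem Wmat_mul_T' (m : Fin 5) : Wmat * T' m = T m * Wmat := by
  fin_cases m <;> simp [Wmat, T, T', Complex.ext_iff] <;> norm_num

/-- `W` is invertible and `W·T'_m = T_m·W`, i.e. `T'_m = W⁻¹·T_m·W`; in particular the
subgroup of `GL(4,ℂ)` generated by `T'₀,…,T'₄` is conjugate (by `W`) to the one
generated by `T₀,…,T₄`. -/
theorem stmt18 :
    IsUnit Wmat ∧
    (∀ m : Fin 5, Wmat * T' m = T m * Wmat ∧ T' m = Wmat⁻¹ * T m * Wmat) ∧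
    (∃ g : (Matrix (Fin 4) (Fin 4) ℂ)ˣ, (g : Matrix (Fin 4) (Fin 4) ℂ) = Wmat ∧
      Subgroup.map (MulAut.conj g).toMonoidHom
          (Subgroup.closure {h : (Matrix (Fin 4) (Fin 4) ℂ)ˣ |
            ∃ m : Fin 5, (h : Matrix (Fin 4) (Fin 4) ℂ) = T' m})
        = Subgroup.closure {h : (Matrix (Fin 4) (Fin 4) ℂ)ˣ |
            ∃ m : Fin 5, (h : Matrix (Fin 4) (Fin 4) ℂ) = T m}) := by
  have hW : IsUnit Wmat := (isUnit_iff_isUnit_det _).2 (by simp [Wmat_det])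
  obtain ⟨g, hg⟩ := hW
  refine ⟨⟨g, hg⟩, fun m => ⟨Wmat_mul_T' m, ?_⟩, g, hg, ?_⟩
  · exact eq_nonsing_inv_mul_mul_of_mul_eq ⟨g, hg⟩ (Wmat_mul_T' m)
  · exact Subgroup.map_conj_closure_setOf_coe_eq g fun m => hg ▸ Wmat_mul_T' m
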